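/- arXiv:2108.12389 — 3 statements merged into one kernel-verified Lean document; each statement's English description precedes it below -/
import Mathlib

section
/- Let k be a field and let p ∈ k[z] be a polynomial of degree at least 3. Suppose ℓ₁, ℓ₂, ℓ₃ ∈ k[x,y,z] are polynomials of total degree at most 1 and μ ∈ k* is such that ℓ₁·ℓ₂ − p(ℓ₃) = μ·(xy − p(z)) in k[x,y,z]. Then there exist a, b, c ∈ k* and d ∈ k with ab = μ, a·b·p(z) = p(cz + d), ℓ₃ = cz + d, and either (ℓ₁, ℓ₂) = (a·x, b·y) or (ℓ₁, ℓ₂) = (a·y, b·x). Consequently, every automorphism of the surface xy = p(z) that is the restriction of an affine automorphism of 𝔸³_k is of the form (x,y,z) ↦ (ax, by, cz+d) or (x,y,z) ↦ (ay, bx, cz+d) with a·b·p(z) = p(cz+d). -/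
open MvPolynomial

/-!
Write `ℓ₁, ℓ₂, ℓ₃` as affine forms and restrict the identity to lines `t ↦ t • s` through the
origin, which turns it into an identity in `k[t]`. On a line in the plane `z = 0` every term
except `p(ℓ₃)` has degree at most `2`, while `p(ℓ₃)` has degree `deg p ≥ 3` unless `ℓ₃` is constant
along the line; hence `ℓ₃ = cz + d`. The identity becomes `ℓ₁ℓ₂ = μxy + q(z)` with
`q = p(cz + d) - μp`, and the coefficients of `t²` and `t` along the lines spanned by the
0/1-vectors `e₀, e₁, e₂, e₀ + e₁, e₀ + e₂, e₁ + e₂` are the coefficient identities of `ℓ₁ℓ₂`.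
They force `{ℓ₁, ℓ₂} = {ax, by}` up to order, after which `q = 0`, and `c ≠ 0` because `p` is not
constant. An automorphism `g` is handled by taking `ℓᵢ = g(xᵢ)`.
-/

namespace MvPolynomial

variable {σ R : Type*} [CommSemiring R]

noncomputable def affineForm [Fintype σ] (a₀ : R) (a : σ → R) : MvPolynomial σ R :=
  ∑ i, C (a i) * X i + C a₀

theorem eq_affineForm_of_totalDegree_le_one [Fintype σ] {l : MvPolynomial σ R}
    (h : l.totalDegree ≤ 1) :
    l = affineForm (coeff 0 l) fun i => coeff (Finsupp.single i 1) l := by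
  classical
  ext m
  simp only [affineForm, C_mul_X_eq_monomial, coeff_add, coeff_C, coeff_sum, coeff_monomial]
  by_cases hm : m ∈ l.support
  · rcases Nat.le_one_iff_eq_zero_or_eq_one.1 ((le_totalDegree hm).trans h) with h0 | h1
    · obtain rfl := (Finsupp.degree_eq_zero_iff m).1 h0
      simp
    · obtain ⟨i, rfl⟩ := (Finsupp.sum_eq_one_iff m).1 h1
      simp [Finsupp.single_eq_single_iff, eq_comm (a := (0 : σ →₀ ℕ))]
  · rw [notMem_support_iff.1 hm]
    have : ∀ n, (if n = m then coeff n l else 0) = 0 := by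
      intro n; split_ifs with hn <;> simp_all
    simp [this]

noncomputable def lineEval (s : σ → R) : MvPolynomial σ R →ₐ[R] Polynomial R :=
  aeval fun i => Polynomial.C (s i) * Polynomial.X

variable (s : σ → R)

@[simp]
theorem lineEval_X (i : σ) : lineEval s (X i) = Polynomial.C (s i) * Polynomial.X :=
  aeval_X _ i

@[simp]
theorem lineEval_affineForm [Fintype σ] (a₀ : R) (a : σ → R) :
    lineEval s (affineForm a₀ a) = Polynomial.C (a ⬝ᵥ s) * Polynomial.X + Polynomial.C a₀ := by
  simp [affineForm, dotProduct, Finset.sum_mul, mul_assoc]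

@[simp]
theorem lineEval_aeval (l : MvPolynomial σ R) (q : Polynomial R) :
    lineEval s (Polynomial.aeval l q) = q.comp (lineEval s l) := by
  rw [← Polynomial.aeval_algHom_apply, Polynomial.comp_eq_aeval]

end MvPolynomial

/-- The hypotheses are the coefficients at `xᵢ², xⱼ², xᵢxₘ, xⱼxₘ, xᵢ, xⱼ` of an identity
`ℓ₁ℓ₂ = μxᵢxⱼ + q(xₘ)`, where `aₙ, bₙ` are the coefficients of `xₙ` in `ℓ₁, ℓ₂` and `a₀, b₀`
their constant terms. -/
theorem affine_factor_coeffs_eq_zero {k : Type*} [CommRing k] [IsDomain k]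
    {ai aj am bi bj bm a₀ b₀ : k} (hij : ai * bj ≠ 0)
    (hii : ai * bi = 0) (hjj : aj * bj = 0) (him : ai * bm + am * bi = 0)
    (hjm : aj * bm + am * bj = 0) (hi : ai * b₀ + a₀ * bi = 0) (hj : aj * b₀ + a₀ * bj = 0) :
    bi = 0 ∧ aj = 0 ∧ bm = 0 ∧ am = 0 ∧ b₀ = 0 ∧ a₀ = 0 := by
  obtain ⟨hai, hbj⟩ := mul_ne_zero_iff.1 hij
  have hbi : bi = 0 := (mul_eq_zero.1 hii).resolve_left hai
  have haj : aj = 0 := (mul_eq_zero.1 hjj).resolve_right hbj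
  subst hbi haj
  simp_all

section Danielewski

variable {k : Type*} [CommRing k] {p q : Polynomial k} {μ a₀ b₀ c₀ : k}
  {a b c : Fin 3 → k}

theorem dotProduct_eq_zero_of_affineForm_mul_sub_aeval_eq [IsDomain k] (hp : 3 ≤ p.natDegree)
    (h : affineForm a₀ a * affineForm b₀ b - Polynomial.aeval (affineForm c₀ c) p
      = C μ * (X 0 * X 1 - Polynomial.aeval (X 2) p))
    {s : Fin 3 → k} (hs : s 2 = 0) : c ⬝ᵥ s = 0 := by
  by_contra hc
  have hs' := congrArg (lineEval s) h
  simp only [map_sub, map_mul, lineEval_affineForm, lineEval_aeval, lineEval_X, hs,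
    algHom_C, Polynomial.algebraMap_eq, map_zero, zero_mul, Polynomial.comp_zero] at hs'
  have hdeg : (p.comp (Polynomial.C (c ⬝ᵥ s) * Polynomial.X + Polynomial.C c₀)).natDegree ≤ 2 := by
    rw [eq_sub_of_add_eq (sub_eq_iff_eq_add'.mp hs').symm]
    compute_degree
  rw [Polynomial.natDegree_comp, Polynomial.natDegree_linear hc, mul_one] at hdeg
  omega

theorem affineForm_eq_C_mul_X_two_add_C [IsDomain k] (hp : 3 ≤ p.natDegree)
    (h : affineForm a₀ a * affineForm b₀ b - Polynomial.aeval (affineForm c₀ c) p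
      = C μ * (X 0 * X 1 - Polynomial.aeval (X 2) p)) :
    affineForm c₀ c = C (c 2) * X 2 + C c₀ := by
  have hc0 : c 0 = 0 := by
    simpa using dotProduct_eq_zero_of_affineForm_mul_sub_aeval_eq hp h (s := Pi.single 0 1) rfl
  have hc1 : c 1 = 0 := by
    simpa using dotProduct_eq_zero_of_affineForm_mul_sub_aeval_eq hp h (s := Pi.single 1 1) rfl
  simp [affineForm, Fin.sum_univ_three, hc0, hc1]

theorem dotProduct_mul_dotProduct_of_affineForm_mul_eq
    (h : affineForm a₀ a * affineForm b₀ b = C μ * (X 0 * X 1) + Polynomial.aeval (X 2) q)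
    (s : Fin 3 → k) :
    (a ⬝ᵥ s) * (b ⬝ᵥ s) = μ * (s 0 * s 1) + q.coeff 2 * s 2 ^ 2 ∧
      (a ⬝ᵥ s) * b₀ + a₀ * (b ⬝ᵥ s) = q.coeff 1 * s 2 := by
  have hs := congrArg (lineEval s) h
  simp only [map_add, map_mul, lineEval_affineForm, lineEval_aeval, lineEval_X, algHom_C,
    Polynomial.algebraMap_eq] at hs
  have hs' : Polynomial.C (a ⬝ᵥ s * b ⬝ᵥ s) * Polynomial.X ^ 2
      + Polynomial.C (a ⬝ᵥ s * b₀ + a₀ * b ⬝ᵥ s) * Polynomial.X + Polynomial.C (a₀ * b₀)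
      = Polynomial.C (μ * (s 0 * s 1)) * Polynomial.X ^ 2
      + q.comp (Polynomial.C (s 2) * Polynomial.X) := by
    simp only [map_mul, map_add]
    linear_combination hs
  constructor
  · simpa [-map_mul, Polynomial.coeff_C, Polynomial.coeff_X]
      using congrArg (Polynomial.coeff · 2) hs'
  · simpa [-map_mul, Polynomial.coeff_C, Polynomial.coeff_X_pow]
      using congrArg (Polynomial.coeff · 1) hs'

theorem exists_eq_C_mul_X_of_affineForm_mul_eq [IsDomain k] (hμ : μ ≠ 0)
    (h : affineForm a₀ a * affineForm b₀ b = C μ * (X 0 * X 1) + Polynomial.aeval (X 2) q) :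
    ∃ α β, α * β = μ ∧
      ((affineForm a₀ a = C α * X 0 ∧ affineForm b₀ b = C β * X 1) ∨
        (affineForm a₀ a = C α * X 1 ∧ affineForm b₀ b = C β * X 0)) := by
  have key := dotProduct_mul_dotProduct_of_affineForm_mul_eq h
  obtain ⟨h00, h0⟩ := key ![1, 0, 0]
  obtain ⟨h11, h1⟩ := key ![0, 1, 0]
  obtain ⟨h22, -⟩ := key ![0, 0, 1]
  obtain ⟨h01, -⟩ := key ![1, 1, 0]
  obtain ⟨h02, -⟩ := key ![1, 0, 1]
  obtain ⟨h12, -⟩ := key ![0, 1, 1]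
  simp only [dotProduct, Fin.sum_univ_three, Matrix.cons_val_zero, Matrix.cons_val_one,
    Matrix.cons_val_two, Matrix.head_cons, Matrix.tail_cons, mul_one, mul_zero, add_zero, zero_add,
    ne_eq, OfNat.ofNat_ne_zero, not_false_eq_true, zero_pow, one_pow]
    at h00 h0 h11 h1 h22 h01 h02 h12
  have hμ' : a 0 * b 1 + a 1 * b 0 = μ := by linear_combination h01 - h00 - h11
  have h02' : a 0 * b 2 + a 2 * b 0 = 0 := by linear_combination h02 - h00 - h22
  have h12' : a 1 * b 2 + a 2 * b 1 = 0 := by linear_combination h12 - h11 - h22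
  by_cases hx : a 0 * b 1 = 0
  · have hy : a 1 * b 0 ≠ 0 := fun hy => hμ (by rw [← hμ', hx, hy, add_zero])
    obtain ⟨hb1, ha0, hb2, ha2, hb₀, ha₀⟩ :=
      affine_factor_coeffs_eq_zero hy h11 h00 h12' h02' h1 h0
    refine ⟨a 1, b 0, by rw [← hμ', ha0, zero_mul, zero_add], Or.inr ⟨?_, ?_⟩⟩ <;>
      simp [affineForm, Fin.sum_univ_three, *]
  · obtain ⟨hb0, ha1, hb2, ha2, hb₀, ha₀⟩ :=
      affine_factor_coeffs_eq_zero hx h00 h11 h02' h12' h0 h1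
    refine ⟨a 0, b 1, by rw [← hμ', ha1, zero_mul, add_zero], Or.inl ⟨?_, ?_⟩⟩ <;>
      simp [affineForm, Fin.sum_univ_three, *]

theorem affine_factorization [IsDomain k] (hp : 3 ≤ p.natDegree) (hμ : μ ≠ 0)
    {l₁ l₂ l₃ : MvPolynomial (Fin 3) k}
    (h₁ : l₁.totalDegree ≤ 1) (h₂ : l₂.totalDegree ≤ 1) (h₃ : l₃.totalDegree ≤ 1)
    (h : l₁ * l₂ - Polynomial.aeval l₃ p = C μ * (X 0 * X 1 - Polynomial.aeval (X 2) p)) :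
    ∃ (a b c d : k), a ≠ 0 ∧ b ≠ 0 ∧ c ≠ 0 ∧ a * b = μ ∧
      Polynomial.C (a * b) * p = p.comp (Polynomial.C c * Polynomial.X + Polynomial.C d) ∧
      l₃ = C c * X 2 + C d ∧
      ((l₁ = C a * X 0 ∧ l₂ = C b * X 1) ∨ (l₁ = C a * X 1 ∧ l₂ = C b * X 0)) := by
  obtain ⟨a₀, a, rfl⟩ : ∃ a₀ a, l₁ = affineForm a₀ a :=
    ⟨_, _, eq_affineForm_of_totalDegree_le_one h₁⟩
  obtain ⟨b₀, b, rfl⟩ : ∃ b₀ b, l₂ = affineForm b₀ b :=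
    ⟨_, _, eq_affineForm_of_totalDegree_le_one h₂⟩
  obtain ⟨c₀, c, rfl⟩ : ∃ c₀ c, l₃ = affineForm c₀ c :=
    ⟨_, _, eq_affineForm_of_totalDegree_le_one h₃⟩
  have hl₃ := affineForm_eq_C_mul_X_two_add_C hp h
  set q := p.comp (Polynomial.C (c 2) * Polynomial.X + Polynomial.C c₀) - Polynomial.C μ * p
  have hprod :
      affineForm a₀ a * affineForm b₀ b = C μ * (X 0 * X 1) + Polynomial.aeval (X 2) q := by
    have : Polynomial.aeval (affineForm c₀ c) p = Polynomial.aeval (X 2)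
        (p.comp (Polynomial.C (c 2) * Polynomial.X + Polynomial.C c₀)) := by
      simp [hl₃, Polynomial.aeval_comp, algebraMap_eq]
    simp only [q, map_sub, map_mul, Polynomial.aeval_C, algebraMap_eq]
    linear_combination h + this
  obtain ⟨α, β, hαβ, hl⟩ := exists_eq_C_mul_X_of_affineForm_mul_eq hμ hprod
  have hq : q = 0 := by
    refine Polynomial.toMvPolynomial_injective (2 : Fin 3) ?_
    have : affineForm a₀ a * affineForm b₀ b = C μ * (X 0 * X 1) := by
      rcases hl with ⟨h1, h2⟩ | ⟨h1, h2⟩ <;> rw [h1, h2, ← hαβ, map_mul] <;> ring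
    simpa [Polynomial.toMvPolynomial, this] using hprod.symm
  have hcomp : Polynomial.C (α * β) * p
      = p.comp (Polynomial.C (c 2) * Polynomial.X + Polynomial.C c₀) := by
    rw [hαβ]; exact (sub_eq_zero.1 hq).symm
  have hαβ0 : α * β ≠ 0 := hαβ ▸ hμ
  have hc2 : c 2 ≠ 0 := by
    intro hc2
    have := congrArg Polynomial.natDegree hcomp
    rw [hc2, map_zero, zero_mul, zero_add, Polynomial.comp_C, Polynomial.natDegree_C,
      Polynomial.natDegree_C_mul hαβ0] at this
    omega
  exact ⟨α, β, c 2, c₀, left_ne_zero_of_mul hαβ0, right_ne_zero_of_mul hαβ0, hc2, hαβ, hcomp,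
    hl₃, hl⟩

end Danielewski

/-- Affine automorphisms of the surface `xy = p(z)` for `deg p ≥ 3`: any factorisation
`ℓ₁ℓ₂ - p(ℓ₃) = μ(xy - p(z))` with `ℓᵢ` of degree at most one forces the standard form,
and consequently every automorphism of the surface restricting an affine automorphism of
`𝔸³` is `(x,y,z) ↦ (ax, by, cz+d)` or `(x,y,z) ↦ (ay, bx, cz+d)` with `abp(z) = p(cz+d)`. -/
theorem affine_autos_of_Danielewski (k : Type) [Field k] (p : Polynomial k)
    (hp : 3 ≤ p.natDegree) :
    (∀ (l1 l2 l3 : MvPolynomial (Fin 3) k) (μ : k), μ ≠ 0 →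
      l1.totalDegree ≤ 1 → l2.totalDegree ≤ 1 → l3.totalDegree ≤ 1 →
      l1 * l2 - Polynomial.aeval l3 p
        = MvPolynomial.C μ * (X 0 * X 1 - Polynomial.aeval (X 2) p) →
      ∃ (a b c d : k), a ≠ 0 ∧ b ≠ 0 ∧ c ≠ 0 ∧ a * b = μ ∧
        Polynomial.C (a * b) * p = p.comp (Polynomial.C c * Polynomial.X + Polynomial.C d) ∧
        l3 = MvPolynomial.C c * X 2 + MvPolynomial.C d ∧
        ((l1 = MvPolynomial.C a * X 0 ∧ l2 = MvPolynomial.C b * X 1) ∨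
         (l1 = MvPolynomial.C a * X 1 ∧ l2 = MvPolynomial.C b * X 0))) ∧
    (∀ (g : MvPolynomial (Fin 3) k ≃ₐ[k] MvPolynomial (Fin 3) k) (μ : k), μ ≠ 0 →
      (∀ i : Fin 3, (g (X i)).totalDegree ≤ 1) →
      g (X 0 * X 1 - Polynomial.aeval (X 2) p)
        = MvPolynomial.C μ * (X 0 * X 1 - Polynomial.aeval (X 2) p) →
      ∃ (a b c d : k), a ≠ 0 ∧ b ≠ 0 ∧ c ≠ 0 ∧ a * b = μ ∧
        Polynomial.C (a * b) * p = p.comp (Polynomial.C c * Polynomial.X + Polynomial.C d) ∧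
        g (X 2) = MvPolynomial.C c * X 2 + MvPolynomial.C d ∧
        ((g (X 0) = MvPolynomial.C a * X 0 ∧ g (X 1) = MvPolynomial.C b * X 1) ∨
         (g (X 0) = MvPolynomial.C a * X 1 ∧ g (X 1) = MvPolynomial.C b * X 0))) := by
  refine ⟨fun l1 l2 l3 μ hμ h1 h2 h3 h => affine_factorization hp hμ h1 h2 h3 h,
    fun g μ hμ hdeg hg => affine_factorization hp hμ (hdeg 0) (hdeg 1) (hdeg 2) ?_⟩
  rwa [map_sub, map_mul, ← Polynomial.aeval_algHom_apply] at hg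
end

section
/- Let p ∈ ℂ[z] be a polynomial in reduced form which is not a monomial (i.e. p ≠ z^{deg p}). Then: (i) whenever c, λ ∈ ℂ* and b ∈ ℂ satisfy p(cz + b) = λ·p(z), one has b = 0; (ii) there exists an integer n ≥ 1 such that the set H = {c ∈ ℂ* : ∃ λ ∈ ℂ*, p(cz) = λ·p(z)} equals the group μ_n of n-th roots of unity (in particular H is a finite cyclic group); (iii) p is of the form p(z) = z^m·q(z^n) for some integer m ≥ 0 and some q ∈ ℂ[z] with q(0) ≠ 0. Moreover, whenever i, j are exponents with nonzero coefficients in p and c ∈ H, one has c^{i−j} = 1. -/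
/-!
Comparing coefficients, `p(cz) = λ p(z)` says exactly that `c^i = λ` for every exponent `i` of
`p`; writing `m` for the lowest exponent, this means `c^(i - m) = 1` for all `i`, i.e. `c^n = 1`
where `n` is the gcd of the `i - m`. The same gcd makes `p / z^m` a polynomial in `z^n`.
For a translation part `b`, the coefficient of `z^(d-1)` in `p(cz + b)` is
`c^(d-1) (a_(d-1) + d a_d b)`, while in `λ p` it is `λ a_(d-1) = 0`; hence `b = 0`.
-/

def ReducedFormC (p : Polynomial ℂ) : Prop :=
  p.Monic ∧ 1 ≤ p.natDegree ∧ p.coeff (p.natDegree - 1) = 0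

theorem pow_finset_gcd_eq_one_iff {M ι : Type*} [Monoid M] (x : M) (s : Finset ι)
    (f : ι → ℕ) : x ^ s.gcd f = 1 ↔ ∀ i ∈ s, x ^ f i = 1 := by
  simp_rw [← orderOf_dvd_iff_pow_eq_one, Finset.dvd_gcd_iff]

open Polynomial

namespace Polynomial

section Translation

variable {R : Type*} [CommRing R]

theorem taylor_coeff_of_natDegree_le_succ {p : R[X]} {n : ℕ} (hp : p.natDegree ≤ n + 1)
    (b : R) : (taylor b p).coeff n = p.coeff n + (n + 1) * p.coeff (n + 1) * b := by
  have hlin : (hasseDeriv n p).natDegree ≤ 1 :=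
    (natDegree_hasseDeriv_le p n).trans (by omega)
  rw [taylor_coeff, eq_X_add_C_of_natDegree_le_one hlin]
  simp [hasseDeriv_coeff, add_comm 1 n]
  ring

theorem coeff_comp_C_mul_X_add_C (p : R[X]) (c b : R) (k : ℕ) :
    (p.comp (C c * X + C b)).coeff k = (taylor b p).coeff k * c ^ k := by
  rw [← comp_C_mul_X_coeff, taylor_apply, comp_assoc]
  simp

theorem eq_zero_of_comp_C_mul_X_add_C_eq_C_mul [IsDomain R] [CharZero R] {p : R[X]}
    (hp : p ≠ 0) (hdeg : 1 ≤ p.natDegree) (hnext : p.coeff (p.natDegree - 1) = 0)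
    {c lam b : R} (hc : c ≠ 0) (h : p.comp (C c * X + C b) = C lam * p) : b = 0 := by
  obtain ⟨n, hn⟩ : ∃ n, p.natDegree = n + 1 := ⟨_, (Nat.succ_pred_eq_of_pos hdeg).symm⟩
  have hcoeff := congrArg (coeff · n) h
  simp only [coeff_comp_C_mul_X_add_C, taylor_coeff_of_natDegree_le_succ hn.le, coeff_C_mul]
    at hcoeff
  rw [hn, Nat.add_sub_cancel] at hnext
  rw [hnext, ← hn, coeff_natDegree] at hcoeff
  simpa [hc, hp, Nat.cast_add_one_ne_zero] using hcoeff

end Translation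

section ExponentGcd

variable {R : Type*} [Semiring R]

noncomputable def exponentGcd (p : R[X]) : ℕ :=
  p.support.gcd fun i => i - p.natTrailingDegree

theorem exponentGcd_dvd {p : R[X]} {i : ℕ} (hi : i ∈ p.support) :
    exponentGcd p ∣ i - p.natTrailingDegree :=
  Finset.gcd_dvd hi

theorem exponentGcd_pos {p : R[X]} (h : p.natTrailingDegree < p.natDegree) :
    0 < exponentGcd p := by
  refine Nat.pos_of_ne_zero fun h0 => ?_
  have := Finset.gcd_eq_zero_iff.mp h0 _
    (natDegree_mem_support_of_nonzero (ne_zero_of_natDegree_gt h))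
  omega

end ExponentGcd

section Scaling

variable {R : Type*} [CommRing R] [IsDomain R]

theorem comp_C_mul_X_eq_C_mul_iff {p : R[X]} {c lam : R} :
    p.comp (C c * X) = C lam * p ↔ ∀ i ∈ p.support, c ^ i = lam := by
  simp only [Polynomial.ext_iff, comp_C_mul_X_coeff, coeff_C_mul, mem_support_iff]
  refine forall_congr' fun i => ?_
  rw [mul_comm lam, mul_eq_mul_left_iff, or_iff_not_imp_right]

theorem pow_exponentGcd_eq_one_iff {p : R[X]} {c : R} (hc : c ≠ 0) :
    c ^ exponentGcd p = 1 ↔ ∀ i ∈ p.support, c ^ i = c ^ p.natTrailingDegree := by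
  rw [exponentGcd, pow_finset_gcd_eq_one_iff]
  refine forall₂_congr fun i hi => ?_
  rw [← mul_eq_right₀ (pow_ne_zero p.natTrailingDegree hc),
    pow_sub_mul_pow c (natTrailingDegree_le_of_mem_supp i hi)]

theorem setOf_comp_C_mul_X_eq_C_mul {p : R[X]} (hp : p ≠ 0) (hn : 0 < exponentGcd p) :
    {c : R | c ≠ 0 ∧ ∃ lam : R, lam ≠ 0 ∧ p.comp (C c * X) = C lam * p}
      = {c : R | c ^ exponentGcd p = 1} := by
  ext c
  simp only [Set.mem_ofPred_eq, comp_C_mul_X_eq_C_mul_iff]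
  constructor
  · rintro ⟨hc, lam, -, h⟩
    rw [pow_exponentGcd_eq_one_iff hc]
    intro i hi
    rw [h i hi, h _ (natTrailingDegree_mem_support_of_nonzero hp)]
  · intro h1
    have hc : c ≠ 0 := ne_zero_pow hn.ne' (h1 ▸ one_ne_zero)
    exact ⟨hc, _, pow_ne_zero _ hc, (pow_exponentGcd_eq_one_iff hc).mp h1⟩

end Scaling

section Expand

variable {R : Type*} [CommSemiring R]

theorem expand_contract_of_dvd {p : R[X]} {n : ℕ} (hn : n ≠ 0)
    (h : ∀ i ∈ p.support, n ∣ i) : expand R n (contract n p) = p := by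
  ext i
  rw [coeff_expand (Nat.pos_of_ne_zero hn), coeff_contract hn]
  split_ifs with hi
  · rw [Nat.div_mul_cancel hi]
  · exact (notMem_support_iff.mp (mt (h i) hi)).symm

theorem exists_eq_X_pow_mul_expand {p : R[X]} (hp : p ≠ 0) {n : ℕ} (hn : n ≠ 0)
    (h : ∀ i ∈ p.support, n ∣ i - p.natTrailingDegree) :
    ∃ q : R[X], q.coeff 0 ≠ 0 ∧ p = X ^ p.natTrailingDegree * expand R n q := by
  obtain ⟨r, hr⟩ : X ^ p.natTrailingDegree ∣ p :=
    X_pow_dvd_iff.mpr fun _ => coeff_eq_zero_of_lt_natTrailingDegree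
  have hshift (k : ℕ) : p.coeff (k + p.natTrailingDegree) = r.coeff k :=
    (congrArg (coeff · _) hr).trans (coeff_X_pow_mul r _ k)
  refine ⟨contract n r, ?_, ?_⟩
  · rw [coeff_contract hn, zero_mul, ← hshift, zero_add]
    exact trailingCoeff_nonzero_iff_nonzero.mpr hp
  · rw [expand_contract_of_dvd hn fun i hi => ?_, ← hr]
    have hi' : i + p.natTrailingDegree ∈ p.support := by
      rwa [mem_support_iff, hshift, ← mem_support_iff]
    simpa only [Nat.add_sub_cancel] using h _ hi'

end Expand

end Polynomial

/-- Symmetries of a reduced non-monomial polynomial: any symmetry `p(cz+b) = λp(z)` has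
`b = 0`, the group `H_p = {c : p(cz) = λp(z)}` equals `μ_n` for some `n ≥ 1`, and
`p = z^m q(z^n)` with `q(0) ≠ 0`; moreover `c^i = c^j` whenever `c ∈ H_p` and
`i, j` carry nonzero coefficients of `p`. -/
theorem symmetries_of_reduced_polynomial (p : Polynomial ℂ) (hred : ReducedFormC p)
    (hmon : p ≠ Polynomial.X ^ p.natDegree) :
    (∀ (c lam b : ℂ), c ≠ 0 → lam ≠ 0 →
      p.comp (Polynomial.C c * Polynomial.X + Polynomial.C b) = Polynomial.C lam * p →
      b = 0) ∧
    ∃ n : ℕ, 1 ≤ n ∧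
      ({c : ℂ | c ≠ 0 ∧ ∃ lam : ℂ, lam ≠ 0 ∧
          p.comp (Polynomial.C c * Polynomial.X) = Polynomial.C lam * p}
        = {c : ℂ | c ^ n = 1}) ∧
      (∃ (m : ℕ) (q : Polynomial ℂ), q.eval 0 ≠ 0 ∧
        p = Polynomial.X ^ m * q.comp (Polynomial.X ^ n)) ∧
      (∀ (i j : ℕ) (c : ℂ), p.coeff i ≠ 0 → p.coeff j ≠ 0 → c ^ n = 1 →
        c ^ i = c ^ j) := by
  obtain ⟨hmonic, hdeg, hnext⟩ := hred
  have hp : p ≠ 0 := hmonic.ne_zero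
  have hn : 0 < exponentGcd p :=
    exponentGcd_pos (not_le.mp (mt hmonic.eq_X_pow_iff_natDegree_le_natTrailingDegree.mpr hmon))
  refine ⟨fun c lam b hc _ h => eq_zero_of_comp_C_mul_X_add_C_eq_C_mul hp hdeg hnext hc h,
    exponentGcd p, hn, setOf_comp_C_mul_X_eq_C_mul hp hn, ?_, ?_⟩
  · obtain ⟨q, hq, hpq⟩ := exists_eq_X_pow_mul_expand hp hn.ne' fun i => exponentGcd_dvd
    exact ⟨_, q, by rwa [← coeff_zero_eq_eval_zero], hpq⟩
  · intro i j c hi hj hc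
    have hpow := (pow_exponentGcd_eq_one_iff (ne_zero_pow hn.ne' (hc ▸ one_ne_zero))).mp hc
    rw [hpow i (mem_support_iff.mpr hi), hpow j (mem_support_iff.mpr hj)]
end

section
/- There are exactly three conjugacy classes of elements of order 2 in GL₂(ℤ): every matrix M ∈ GL₂(ℤ) with M² = I and M ≠ I is conjugate in GL₂(ℤ) to exactly one of the three matrices σ₁ = [[1,0],[0,−1]], σ₂ = [[−1,0],[0,−1]], σ₃ = [[0,1],[1,0]], and these three matrices are pairwise non-conjugate in GL₂(ℤ). -/
/-!
An involution `M ≠ 1` of `ℤ²` is either `-1` or has trace `0`, i.e. `M = [[a, b], [c, -a]]` with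
`a² + bc = 1`. In the latter case `M + 1` is nonzero and its image consists of fixed vectors, so `M`
fixes a primitive vector `v`. Completing `v` to a basis of `ℤ²` puts `M` in the form `[[1, s], [0, -1]]`,
and conjugating by `[[1, t], [0, 1]]` changes `s` by `2t`: even `s` gives `[[1, 0], [0, -1]]`, odd `s`
gives `[[0, 1], [1, 0]]`. The three representatives are separated by the determinant and by whether
they reduce to the identity modulo `2`.
-/

open Matrix

/-- Conjugacy in `GL₂(ℤ)`, expressed on integer matrices with unit determinant. -/
def GL2ZConj (M N : Matrix (Fin 2) (Fin 2) ℤ) : Prop :=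
  ∃ P : Matrix (Fin 2) (Fin 2) ℤ, IsUnit P.det ∧ P * M * P⁻¹ = N

theorem Matrix.of_fin_two_eq_iff {α : Type*} {a b c d a' b' c' d' : α} :
    !![a, b; c, d] = !![a', b'; c', d'] ↔ a = a' ∧ b = b' ∧ c = c' ∧ d = d' := by
  simp [and_assoc]

namespace GL2ZConj

variable {M N L : Matrix (Fin 2) (Fin 2) ℤ}

theorem of_mul_eq_mul (P : Matrix (Fin 2) (Fin 2) ℤ) (hP : IsUnit P.det) (h : P * M = N * P) :
    GL2ZConj M N :=
  ⟨P, hP, by rw [h, mul_nonsing_inv_cancel_right _ _ hP]⟩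

theorem exists_mul_eq_mul (h : GL2ZConj M N) :
    ∃ P : Matrix (Fin 2) (Fin 2) ℤ, IsUnit P.det ∧ P * M = N * P := by
  obtain ⟨P, hP, rfl⟩ := h
  exact ⟨P, hP, by rw [nonsing_inv_mul_cancel_right _ _ hP]⟩

theorem refl (M : Matrix (Fin 2) (Fin 2) ℤ) : GL2ZConj M M :=
  of_mul_eq_mul 1 (by simp) (by simp)

theorem symm (h : GL2ZConj M N) : GL2ZConj N M := by
  obtain ⟨P, hP, rfl⟩ := h
  refine of_mul_eq_mul P⁻¹ (isUnit_nonsing_inv_det P hP) ?_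
  simp only [Matrix.mul_assoc]
  exact nonsing_inv_mul_cancel_left _ _ hP

theorem trans (h₁ : GL2ZConj M N) (h₂ : GL2ZConj N L) : GL2ZConj M L := by
  obtain ⟨P, hP, h₁⟩ := h₁.exists_mul_eq_mul
  obtain ⟨Q, hQ, h₂⟩ := h₂.exists_mul_eq_mul
  refine of_mul_eq_mul (Q * P) (by rw [det_mul]; exact hQ.mul hP) ?_
  rw [Matrix.mul_assoc, h₁, ← Matrix.mul_assoc, h₂, Matrix.mul_assoc]

theorem det_eq (h : GL2ZConj M N) : M.det = N.det := by
  obtain ⟨P, hP, h⟩ := h.exists_mul_eq_mul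
  have hdet := congrArg det h
  rw [det_mul, det_mul, mul_comm] at hdet
  exact mul_right_cancel₀ hP.ne_zero hdet

theorem map_eq_one {R : Type*} [CommRing R] (f : ℤ →+* R) (h : GL2ZConj M N)
    (hM : M.map f = 1) : N.map f = 1 := by
  obtain ⟨P, hP, h⟩ := h.exists_mul_eq_mul
  have hPf : IsUnit (P.map f).det := f.map_det P ▸ hP.map f
  have hcomm := congrArg (·.map f) h
  simp only [Matrix.map_mul, hM, Matrix.mul_one] at hcomm
  calc N.map f = N.map f * P.map f * (P.map f)⁻¹ := (mul_nonsing_inv_cancel_right _ _ hPf).symm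
    _ = 1 := by rw [← hcomm, mul_nonsing_inv _ hPf]

end GL2ZConj

theorem eq_neg_one_or_exists_traceless_of_mul_self_eq_one {M : Matrix (Fin 2) (Fin 2) ℤ}
    (hM : M * M = 1) (hne : M ≠ 1) :
    M = !![-1, 0; 0, -1] ∨ ∃ a b c : ℤ, a * a + b * c = 1 ∧ M = !![a, b; c, -a] := by
  obtain ⟨a, b, c, d, rfl⟩ : ∃ a b c d : ℤ, M = !![a, b; c, d] := ⟨_, _, _, _, M.eta_fin_two⟩
  rw [mul_fin_two, one_fin_two, of_fin_two_eq_iff] at hM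
  rw [one_fin_two, ne_eq, of_fin_two_eq_iff] at hne
  obtain ⟨h₀₀, h₀₁, h₁₀, h₁₁⟩ := hM
  rcases eq_or_ne (a + d) 0 with htr | htr
  · exact Or.inr ⟨a, b, c, h₀₀, by rw [show d = -a by linarith]⟩
  obtain rfl : b = 0 :=
    (mul_eq_zero.mp (by linear_combination h₀₁ : b * (a + d) = 0)).resolve_right htr
  obtain rfl : c = 0 :=
    (mul_eq_zero.mp (by linear_combination h₁₀ : c * (a + d) = 0)).resolve_right htr
  obtain rfl : a = d := sub_eq_zero.mp <| (mul_eq_zero.mp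
    (by linear_combination h₀₀ - h₁₁ : (a - d) * (a + d) = 0)).resolve_right htr
  rcases mul_self_eq_one_iff.mp (by linarith : a * a = 1) with rfl | rfl
  · exact absurd ⟨rfl, rfl, rfl, rfl⟩ hne
  · exact Or.inl rfl

theorem exists_isCoprime_fixed_vector {a b c : ℤ} (h : a * a + b * c = 1) :
    ∃ x y : ℤ, IsCoprime x y ∧ a * x + b * y = x ∧ c * x - a * y = y := by
  -- the columns `(a + 1, c)` and `(b, 1 - a)` of `M + 1` are fixed by `M`, and not both zero
  obtain ⟨x, y, hxy, hx, hy⟩ :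
      ∃ x y : ℤ, (x ≠ 0 ∨ y ≠ 0) ∧ a * x + b * y = x ∧ c * x - a * y = y := by
    by_cases ha : a = 1 ∧ b = 0
    · exact ⟨a + 1, c, by omega, by linear_combination h, by ring⟩
    · exact ⟨b, 1 - a, by omega, by ring, by linear_combination h⟩
  obtain ⟨g, x', y', hg, hgcd, rfl, rfl⟩ := Int.exists_gcd_one' (Int.gcd_pos_iff.mpr hxy)
  have hg : (g : ℤ) ≠ 0 := by positivity
  refine ⟨x', y', Int.isCoprime_iff_gcd_eq_one.mpr hgcd, ?_, ?_⟩
  · exact mul_right_cancel₀ hg (by linear_combination hx)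
  · exact mul_right_cancel₀ hg (by linear_combination hy)

theorem GL2ZConj.exists_upper_triangular_of_fixed_vector {a b c x y : ℤ} (hxy : IsCoprime x y)
    (hx : a * x + b * y = x) (hy : c * x - a * y = y) :
    ∃ s : ℤ, GL2ZConj !![1, s; 0, -1] !![a, b; c, -a] := by
  obtain ⟨p, q, hpq⟩ := hxy
  refine ⟨b * p ^ 2 - 2 * a * p * q - c * q ^ 2, of_mul_eq_mul !![x, -q; y, p] ?_ ?_⟩
  · rw [det_fin_two_of, show x * p - -q * y = 1 by linear_combination hpq]
    exact isUnit_one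
  · rw [mul_fin_two, mul_fin_two, of_fin_two_eq_iff]
    refine ⟨by linear_combination -hx, ?_, by linear_combination -hy, ?_⟩
    · linear_combination -(p * q) * hx - q ^ 2 * hy - (q * (1 + a) - b * p) * hpq
    · linear_combination p ^ 2 * hx + p * q * hy - (c * q + (a - 1) * p) * hpq

theorem GL2ZConj.upper_triangular_cases (s : ℤ) :
    GL2ZConj !![1, 0; 0, -1] !![1, s; 0, -1] ∨ GL2ZConj !![0, 1; 1, 0] !![1, s; 0, -1] := by
  obtain ⟨t, rfl | rfl⟩ := Int.even_or_odd' s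
  · refine Or.inl (of_mul_eq_mul !![1, -t; 0, 1] (by simp [det_fin_two_of]) ?_)
    rw [mul_fin_two, mul_fin_two, of_fin_two_eq_iff]
    exact ⟨by ring, by ring, by ring, by ring⟩
  · refine Or.inr (of_mul_eq_mul !![1 + t, -t; -1, 1] (by simp [det_fin_two_of]) ?_)
    rw [mul_fin_two, mul_fin_two, of_fin_two_eq_iff]
    exact ⟨by ring, by ring, by ring, by ring⟩

theorem GL2ZConj.exists_of_mul_self_eq_one {M : Matrix (Fin 2) (Fin 2) ℤ} (hM : M * M = 1)
    (hne : M ≠ 1) :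
    GL2ZConj !![1, 0; 0, -1] M ∨ GL2ZConj !![-1, 0; 0, -1] M ∨ GL2ZConj !![0, 1; 1, 0] M := by
  rcases eq_neg_one_or_exists_traceless_of_mul_self_eq_one hM hne with rfl | ⟨a, b, c, h, rfl⟩
  · exact Or.inr (Or.inl (refl _))
  obtain ⟨x, y, hxy, hx, hy⟩ := exists_isCoprime_fixed_vector h
  obtain ⟨s, hs⟩ := exists_upper_triangular_of_fixed_vector hxy hx hy
  rcases upper_triangular_cases s with h₁ | h₃
  · exact Or.inl (h₁.trans hs)
  · exact Or.inr (Or.inr (h₃.trans hs))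

/-- There are exactly three conjugacy classes of elements of order 2 in `GL₂(ℤ)`,
represented by `[[1,0],[0,-1]]`, `[[-1,0],[0,-1]]` and `[[0,1],[1,0]]`. -/
theorem three_conjugacy_classes_of_involutions_GL2Z :
    (∀ M : Matrix (Fin 2) (Fin 2) ℤ, IsUnit M.det → M * M = 1 → M ≠ 1 →
      (GL2ZConj !![1, 0; 0, -1] M ∧ ¬GL2ZConj !![-1, 0; 0, -1] M ∧ ¬GL2ZConj !![0, 1; 1, 0] M) ∨
      (¬GL2ZConj !![1, 0; 0, -1] M ∧ GL2ZConj !![-1, 0; 0, -1] M ∧ ¬GL2ZConj !![0, 1; 1, 0] M) ∨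
      (¬GL2ZConj !![1, 0; 0, -1] M ∧ ¬GL2ZConj !![-1, 0; 0, -1] M ∧ GL2ZConj !![0, 1; 1, 0] M)) ∧
    ¬GL2ZConj !![1, 0; 0, -1] !![-1, 0; 0, -1] ∧
    ¬GL2ZConj !![1, 0; 0, -1] !![0, 1; 1, 0] ∧
    ¬GL2ZConj !![-1, 0; 0, -1] !![0, 1; 1, 0] := by
  have h₁₂ : ¬GL2ZConj !![1, 0; 0, -1] !![-1, 0; 0, -1] := fun h => by
    simpa [det_fin_two_of] using h.det_eq
  have h₁₃ : ¬GL2ZConj !![1, 0; 0, -1] !![0, 1; 1, 0] := fun h =>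
    absurd (h.map_eq_one (Int.castRingHom (ZMod 2)) (by rw [one_fin_two]; decide))
      (by rw [one_fin_two]; decide)
  have h₂₃ : ¬GL2ZConj !![-1, 0; 0, -1] !![0, 1; 1, 0] := fun h => by
    simpa [det_fin_two_of] using h.det_eq
  refine ⟨fun M _ hM hne => ?_, h₁₂, h₁₃, h₂₃⟩
  have other {A B : Matrix (Fin 2) (Fin 2) ℤ} (hAB : ¬GL2ZConj A B) (hA : GL2ZConj A M) :
      ¬GL2ZConj B M := fun hB => hAB (hA.trans hB.symm)
  rcases GL2ZConj.exists_of_mul_self_eq_one hM hne with h | h | h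
  · exact Or.inl ⟨h, other h₁₂ h, other h₁₃ h⟩
  · exact Or.inr (Or.inl ⟨other (mt .symm h₁₂) h, h, other h₂₃ h⟩)
  · exact Or.inr (Or.inr ⟨other (mt .symm h₁₃) h, other (mt .symm h₂₃) h, h⟩)
end
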